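/- Let J ≥ 1 be an integer, let z be a real with 0 ≤ z < 1/J, and let L ∈ ℕ. Then ∑_{n_1≥0,…,n_J≥0} ((L+n_1+…+n_J)!/(n_1!·…·n_J!))·z^{n_1+…+n_J}·n_J² = (L+1)!·((L+2−J)z + 1)·z/(1−Jz)^{L+3}, the family being summable. -/

import Mathlib

open scoped BigOperators

/-- factorial ratio as choose. -/
lemma fact_ratio (K m : ℕ) :
    ((K + m).factorial : ℝ) / (m.factorial : ℝ) = (K.factorial : ℝ) * ((m + K).choose K) := by
  have h : (m + K).choose K * K.factorial * m.factorial = (m + K).factorial := by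
    have := Nat.choose_mul_factorial_mul_factorial (Nat.le_add_left K m)
    simpa using this
  have hm : (m.factorial : ℝ) ≠ 0 := by exact_mod_cast m.factorial_ne_zero
  rw [div_eq_iff hm]
  have : ((m + K).factorial : ℝ) = (m + K).choose K * K.factorial * m.factorial := by
    exact_mod_cast h.symm
  rw [show K + m = m + K by ring, this]
  ring

/-- One-dimensional negative binomial series. -/
lemma hasSum_fact_div (K : ℕ) {r : ℝ} (h0 : 0 ≤ r) (h1 : r < 1) :
    HasSum (fun m : ℕ => ((K + m).factorial : ℝ) / (m.factorial : ℝ) * r ^ m)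
      ((K.factorial : ℝ) / (1 - r) ^ (K + 1)) := by
  have hr : ‖r‖ < 1 := by rwa [Real.norm_eq_abs, abs_of_nonneg h0]
  have hfun : (fun m : ℕ => ((K + m).factorial : ℝ) / (m.factorial : ℝ) * r ^ m)
      = fun m : ℕ => (K.factorial : ℝ) * (((m + K).choose K : ℝ) * r ^ m) := by
    funext m; rw [fact_ratio]; ring
  rw [hfun, show (K.factorial : ℝ) / (1 - r) ^ (K + 1)
      = (K.factorial : ℝ) * (1 / (1 - r) ^ (K + 1)) by ring]
  exact (hasSum_choose_mul_geometric_of_norm_lt_one K hr).mul_left (K.factorial : ℝ)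

/-- Multidimensional version, by induction on the number of variables. -/
lemma hasSum_multi (k : ℕ) {z : ℝ} (hz0 : 0 ≤ z) (hz : (k : ℝ) * z < 1) (K : ℕ) :
    HasSum (fun v : Fin k → ℕ =>
        ((K + ∑ i, v i).factorial : ℝ) / (∏ i, ((v i).factorial : ℝ)) * z ^ (∑ i, v i))
      ((K.factorial : ℝ) / (1 - k * z) ^ (K + 1)) := by
  induction k generalizing K with
  | zero =>
      have := hasSum_unique (α := ℝ) (fun v : Fin 0 → ℕ =>
        ((K + ∑ i, v i).factorial : ℝ) / (∏ i, ((v i).factorial : ℝ)) * z ^ (∑ i, v i))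
      simpa using this
  | succ k ih =>
      have hkz : (k : ℝ) * z < 1 := by
        have : (k : ℝ) * z ≤ (k + 1 : ℝ) * z := by nlinarith
        push_cast at hz ⊢; linarith
      have hc : 0 < 1 - (k : ℝ) * z := by linarith
      have hd : 0 < 1 - ((k : ℕ) + 1 : ℝ) * z := by push_cast at hz ⊢; linarith
      set c : ℝ := 1 - (k : ℝ) * z with hcdef
      set u : ℝ := z / c with hudef
      have hu0 : 0 ≤ u := div_nonneg hz0 hc.le
      have hu1 : u < 1 := by
        rw [div_lt_one hc]
        push_cast at hz; linarith
      -- the function on pairs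
      set f : ℕ × (Fin k → ℕ) → ℝ := fun p =>
        ((K + (p.1 + ∑ i, p.2 i)).factorial : ℝ) /
          ((p.1.factorial : ℝ) * ∏ i, ((p.2 i).factorial : ℝ)) * z ^ (p.1 + ∑ i, p.2 i)
        with hfdef
      have hfnn : ∀ p, 0 ≤ f p := by
        intro p
        exact mul_nonneg (div_nonneg (by positivity) (mul_nonneg (by positivity)
          (Finset.prod_nonneg fun i _ => by positivity))) (pow_nonneg hz0 _)
      set g : ℕ → ℝ := fun m =>
        ((K + m).factorial : ℝ) / (1 - (k : ℝ) * z) ^ (K + m + 1) * (z ^ m / m.factorial)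
        with hgdef
      have hfib : ∀ m : ℕ, HasSum (fun w => f (m, w)) (g m) := by
        intro m
        have := (ih hkz (K + m)).mul_right (z ^ m / m.factorial)
        convert this using 2 with w
        · rfl
        · simp only [hfdef]
          have hm : (m.factorial : ℝ) ≠ 0 := by exact_mod_cast m.factorial_ne_zero
          have hw : (∏ i, ((w i).factorial : ℝ)) ≠ 0 := by
            apply Finset.prod_ne_zero_iff.2
            intro i _
            exact_mod_cast (w i).factorial_ne_zero
          rw [show K + (m + ∑ i, w i) = K + m + ∑ i, w i by ring, pow_add]
          simp only [div_eq_mul_inv, mul_inv]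
          ring
      have hg : HasSum g ((K.factorial : ℝ) / (1 - ((k : ℕ) + 1 : ℝ) * z) ^ (K + 1)) := by
        have h1 := (hasSum_fact_div K hu0 hu1).mul_right ((1 / c ^ (K + 1)))
        have hgeq : g = fun m =>
            ((K + m).factorial : ℝ) / (m.factorial : ℝ) * u ^ m * (1 / c ^ (K + 1)) := by
          funext m
          simp only [hgdef, hudef, div_pow]
          have hm : (m.factorial : ℝ) ≠ 0 := by exact_mod_cast m.factorial_ne_zero
          have hcm : c ^ m ≠ 0 := pow_ne_zero _ hc.ne'
          rw [show K + m + 1 = (K + 1) + m by ring, pow_add]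
          simp only [div_eq_mul_inv, mul_inv]
          ring
        have h1u : 1 - u = (1 - ((k : ℕ) + 1 : ℝ) * z) / c := by
          rw [hudef, eq_div_iff hc.ne', sub_mul, one_mul, div_mul_cancel₀ _ hc.ne', hcdef]
          push_cast
          ring
        have hdne : (1 - ((k : ℕ) + 1 : ℝ) * z) ≠ 0 := by push_cast at hd ⊢; exact hd.ne'
        have hval : (K.factorial : ℝ) / (1 - ((k : ℕ) + 1 : ℝ) * z) ^ (K + 1)
            = (K.factorial : ℝ) / (1 - u) ^ (K + 1) * (1 / c ^ (K + 1)) := by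
          rw [h1u, div_pow]
          field_simp
        rw [hgeq, hval]
        exact h1
      -- summability of f
      have hfsum : Summable f := by
        refine (summable_prod_of_nonneg hfnn).2 ⟨fun m => (hfib m).summable, ?_⟩
        have : (fun m => ∑' w, f (m, w)) = g := funext fun m => (hfib m).tsum_eq
        rw [this]; exact hg.summable
      have hfh : HasSum f ((K.factorial : ℝ) / (1 - ((k : ℕ) + 1 : ℝ) * z) ^ (K + 1)) := by
        have h2 := hfsum.hasSum.prod_fiberwise fun m => hfib m
        have h3 : (∑' p, f p) = (K.factorial : ℝ) / (1 - ((k : ℕ) + 1 : ℝ) * z) ^ (K + 1) :=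
          h2.unique hg
        exact h3 ▸ hfsum.hasSum
      -- transfer along the equivalence
      rw [show ((k : ℕ) + 1 : ℝ) = ((k + 1 : ℕ) : ℝ) by push_cast; ring] at hfh
      have heq : (fun v : Fin (k + 1) → ℕ =>
          ((K + ∑ i, v i).factorial : ℝ) / (∏ i, ((v i).factorial : ℝ)) * z ^ (∑ i, v i)) ∘
          (Fin.insertNthEquiv (fun _ : Fin (k + 1) => ℕ) 0) = f := by
        funext p
        obtain ⟨m, w⟩ := p
        simp only [Function.comp_apply, Fin.insertNthEquiv_apply, hfdef]
        rw [Fin.sum_univ_succAbove _ 0, Fin.prod_univ_succAbove _ 0]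
        simp [Fin.insertNth_apply_same, Fin.insertNth_apply_succAbove]
      refine (Fin.insertNthEquiv (fun _ : Fin (k + 1) => ℕ) 0).hasSum_iff.1 ?_
      rw [heq]
      exact hfh

/-- 1-d series with weight m. -/
lemma hasSum_fact_div_m (K : ℕ) {r : ℝ} (h0 : 0 ≤ r) (h1 : r < 1) :
    HasSum (fun m : ℕ => ((K + m).factorial : ℝ) / (m.factorial : ℝ) * (m : ℝ) * r ^ m)
      (((K + 1).factorial : ℝ) * r / (1 - r) ^ (K + 2)) := by
  set f : ℕ → ℝ := fun m => ((K + m).factorial : ℝ) / (m.factorial : ℝ) * (m : ℝ) * r ^ m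
    with hfdef
  have hshift : HasSum (fun j => f (j + 1))
      (((K + 1).factorial : ℝ) / (1 - r) ^ (K + 2) * r) := by
    have := (hasSum_fact_div (K + 1) h0 h1).mul_right r
    convert this using 2 with j
    · rfl
    simp only [hfdef]
    have hj : ((j + 1).factorial : ℝ) = (j + 1) * j.factorial := by
      rw [Nat.factorial_succ]; push_cast; ring
    have hjf : (j.factorial : ℝ) ≠ 0 := by exact_mod_cast j.factorial_ne_zero
    rw [show K + (j + 1) = K + 1 + j by ring, hj, pow_succ]
    field_simp
    push_cast
    ring
  have := (hasSum_nat_add_iff (f := f) 1).1 hshift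
  simp only [Finset.range_one, Finset.sum_singleton, hfdef] at this
  norm_num at this
  convert this using 1
  · rfl
  ring

/-- 1-d series with weight m(m-1). -/
lemma hasSum_fact_div_mm (K : ℕ) {r : ℝ} (h0 : 0 ≤ r) (h1 : r < 1) :
    HasSum (fun m : ℕ =>
        ((K + m).factorial : ℝ) / (m.factorial : ℝ) * ((m : ℝ) * ((m : ℝ) - 1)) * r ^ m)
      (((K + 2).factorial : ℝ) * r ^ 2 / (1 - r) ^ (K + 3)) := by
  set f : ℕ → ℝ := fun m =>
      ((K + m).factorial : ℝ) / (m.factorial : ℝ) * ((m : ℝ) * ((m : ℝ) - 1)) * r ^ m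
    with hfdef
  have hshift : HasSum (fun j => f (j + 2))
      (((K + 2).factorial : ℝ) / (1 - r) ^ (K + 3) * r ^ 2) := by
    have := (hasSum_fact_div (K + 2) h0 h1).mul_right (r ^ 2)
    convert this using 2 with j
    · rfl
    simp only [hfdef]
    have hj2 : ((j + 2).factorial : ℝ) = (j + 2) * (j + 1) * j.factorial := by
      rw [show j + 2 = (j + 1) + 1 by ring, Nat.factorial_succ, Nat.factorial_succ]
      push_cast; ring
    have hjf : (j.factorial : ℝ) ≠ 0 := by exact_mod_cast j.factorial_ne_zero
    rw [show K + (j + 2) = K + 2 + j by ring, hj2, show j + 2 = j + 2 from rfl]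
    rw [pow_add]
    push_cast
    field_simp
    ring
  have := (hasSum_nat_add_iff (f := f) 2).1 hshift
  have hsum2 : ∑ i ∈ Finset.range 2, f i = 0 := by
    simp [hfdef, Finset.sum_range_succ]
  rw [hsum2, add_zero] at this
  convert this using 1
  · rfl
  ring

/-- 1-d series with weight m². -/
lemma hasSum_fact_div_msq (K : ℕ) {r : ℝ} (h0 : 0 ≤ r) (h1 : r < 1) :
    HasSum (fun m : ℕ => ((K + m).factorial : ℝ) / (m.factorial : ℝ) * (m : ℝ) ^ 2 * r ^ m)
      (((K + 2).factorial : ℝ) * r ^ 2 / (1 - r) ^ (K + 3)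
        + ((K + 1).factorial : ℝ) * r / (1 - r) ^ (K + 2)) := by
  have h := (hasSum_fact_div_mm K h0 h1).add (hasSum_fact_div_m K h0 h1)
  convert h using 2 with m
  ring

/-- equal arguments, with a factor `n_J²`. -/
theorem stmt_14 (J : ℕ) (hJ : 1 ≤ J) (z : ℝ) (hz0 : 0 ≤ z) (hz : z < 1 / J) (L : ℕ) :
    Summable (fun v : Fin J → ℕ =>
      ((L + ∑ i, v i).factorial : ℝ) / (∏ i, ((v i).factorial : ℝ))
        * z ^ (∑ i, v i) * (v ⟨J - 1, by omega⟩ : ℝ) ^ 2) ∧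
    (∑' v : Fin J → ℕ,
        ((L + ∑ i, v i).factorial : ℝ) / (∏ i, ((v i).factorial : ℝ))
          * z ^ (∑ i, v i) * (v ⟨J - 1, by omega⟩ : ℝ) ^ 2)
      = ((L + 1).factorial : ℝ) * (((L:ℝ) + 2 - J) * z + 1) * z
          / (1 - J * z) ^ (L + 3) := by
  obtain ⟨k, rfl⟩ : ∃ k, J = k + 1 := ⟨J - 1, by omega⟩
  have hJz : ((k : ℝ) + 1) * z < 1 := by
    rcases eq_or_lt_of_le hz0 with h | h
    · rw [← h]; norm_num
    · rw [lt_div_iff₀ (by push_cast; positivity)] at hz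
      push_cast at hz ⊢
      linarith
  have hkz : (k : ℝ) * z < 1 := by nlinarith
  have hc : 0 < 1 - (k : ℝ) * z := by linarith
  have hd : 0 < 1 - ((k : ℝ) + 1) * z := by linarith
  set c : ℝ := 1 - (k : ℝ) * z with hcdef
  set u : ℝ := z / c with hudef
  have hu0 : 0 ≤ u := div_nonneg hz0 hc.le
  have hu1 : u < 1 := by rw [div_lt_one hc]; linarith
  have h1u : 1 - u = (1 - ((k : ℝ) + 1) * z) / c := by
    rw [hudef, eq_div_iff hc.ne', sub_mul, one_mul, div_mul_cancel₀ _ hc.ne', hcdef]; ring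
  -- target value
  set S : ℝ := ((L + 1).factorial : ℝ) * (((L:ℝ) + 2 - ((k : ℕ) + 1 : ℕ)) * z + 1) * z
      / (1 - ((k : ℕ) + 1 : ℕ) * z) ^ (L + 3) with hSdef
  -- the pivot is the last index
  have hpivot : (⟨(k + 1) - 1, by omega⟩ : Fin (k + 1)) = Fin.last k := rfl
  -- function on pairs
  set f : ℕ × (Fin k → ℕ) → ℝ := fun p =>
    ((L + (p.1 + ∑ i, p.2 i)).factorial : ℝ) /
      ((p.1.factorial : ℝ) * ∏ i, ((p.2 i).factorial : ℝ)) * z ^ (p.1 + ∑ i, p.2 i)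
      * (p.1 : ℝ) ^ 2
    with hfdef
  have hfnn : ∀ p, 0 ≤ f p := by
    intro p
    exact mul_nonneg (mul_nonneg (div_nonneg (by positivity) (mul_nonneg (by positivity)
      (Finset.prod_nonneg fun i _ => by positivity))) (pow_nonneg hz0 _)) (by positivity)
  set g : ℕ → ℝ := fun m =>
    ((L + m).factorial : ℝ) / c ^ (L + m + 1) * (z ^ m / m.factorial * (m : ℝ) ^ 2)
    with hgdef
  have hfib : ∀ m : ℕ, HasSum (fun w => f (m, w)) (g m) := by
    intro m
    have := (hasSum_multi k hz0 hkz (L + m)).mul_right (z ^ m / m.factorial * (m : ℝ) ^ 2)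
    convert this using 2 with w
    · rfl
    · simp only [hfdef]
      have hm : (m.factorial : ℝ) ≠ 0 := by exact_mod_cast m.factorial_ne_zero
      have hw : (∏ i, ((w i).factorial : ℝ)) ≠ 0 := by
        apply Finset.prod_ne_zero_iff.2
        intro i _
        exact_mod_cast (w i).factorial_ne_zero
      field_simp
      rw [show L + (m + ∑ i, w i) = L + m + ∑ i, w i by ring, pow_add]
      ring
  have hg : HasSum g S := by
    have h1 := (hasSum_fact_div_msq L hu0 hu1).mul_right ((1 / c ^ (L + 1)))
    have hgeq : g = fun m =>
        ((L + m).factorial : ℝ) / (m.factorial : ℝ) * (m : ℝ) ^ 2 * u ^ m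
          * (1 / c ^ (L + 1)) := by
      funext m
      simp only [hgdef, hudef, div_pow]
      have hm : (m.factorial : ℝ) ≠ 0 := by exact_mod_cast m.factorial_ne_zero
      have hcm : c ^ m ≠ 0 := pow_ne_zero _ hc.ne'
      rw [show L + m + 1 = (L + 1) + m by ring, pow_add]
      field_simp
    rw [hgeq]
    convert h1 using 1
    · rfl
    rw [hSdef, h1u]
    have hL2 : ((L + 2).factorial : ℝ) = (L + 2) * (L + 1).factorial := by
      rw [Nat.factorial_succ]; push_cast; ring
    have hdne : (1 - ((k : ℝ) + 1) * z) ≠ 0 := hd.ne'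
    have hcne : c ≠ 0 := hc.ne'
    push_cast
    rw [hL2, hudef]
    have hdc : 1 - ((k:ℝ) + 1) * z = c - z := by rw [hcdef]; ring
    have hdne' : c - z ≠ 0 := hdc ▸ hdne
    have hk : ((L:ℝ) + 2 - ((k:ℝ) + 1)) * z + 1 = ((L:ℝ) + 1) * z + c := by rw [hcdef]; ring
    rw [hdc, hk]
    simp only [div_pow]
    field_simp
    ring
  have hfsum : Summable f := by
    refine (summable_prod_of_nonneg hfnn).2 ⟨fun m => (hfib m).summable, ?_⟩
    have : (fun m => ∑' w, f (m, w)) = g := funext fun m => (hfib m).tsum_eq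
    rw [this]; exact hg.summable
  have hfh : HasSum f S := by
    have h2 := hfsum.hasSum.prod_fiberwise fun m => hfib m
    exact (h2.unique hg) ▸ hfsum.hasSum
  -- transfer along the equivalence with pivot = last
  have heq : (fun v : Fin (k + 1) → ℕ =>
      ((L + ∑ i, v i).factorial : ℝ) / (∏ i, ((v i).factorial : ℝ))
        * z ^ (∑ i, v i) * (v ⟨(k + 1) - 1, by omega⟩ : ℝ) ^ 2) ∘
      (Fin.insertNthEquiv (fun _ : Fin (k + 1) => ℕ) (Fin.last k)) = f := by
    funext p
    obtain ⟨m, w⟩ := p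
    simp only [Function.comp_apply, Fin.insertNthEquiv_apply, hfdef, hpivot]
    rw [Fin.sum_univ_succAbove _ (Fin.last k), Fin.prod_univ_succAbove _ (Fin.last k)]
    simp [Fin.insertNth_apply_same, Fin.insertNth_apply_succAbove]
  have hmain : HasSum (fun v : Fin (k + 1) → ℕ =>
      ((L + ∑ i, v i).factorial : ℝ) / (∏ i, ((v i).factorial : ℝ))
        * z ^ (∑ i, v i) * (v ⟨(k + 1) - 1, by omega⟩ : ℝ) ^ 2) S := by
    rw [← (Fin.insertNthEquiv (fun _ : Fin (k + 1) => ℕ) (Fin.last k)).hasSum_iff, heq]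
    exact hfh
  exact ⟨hmain.summable, by rw [hmain.tsum_eq, hSdef]⟩
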